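/- arXiv:2410.23826 — 2 statements merged into one kernel-verified Lean document; each statement's English description precedes it below -/
import Mathlib

section
/- Let G = (V,E,w) be a connected weighted graph, let Δ > 0 be a real number, and let N ⊆ V be a set of at least 2 vertices such that d_G(u,v) > Δ for all distinct u, v ∈ N. Then |N|·Δ ≤ 2·w(MST(G)). -/
open scoped ENNReal

/-- The cost (total weight) of a walk in a graph, with edge weights `w`. -/
noncomputable def walkCost {V : Type*} {G : SimpleGraph V} (w : Sym2 V → ℝ) {u v : V}
    (p : G.Walk u v) : ℝ≥0∞ :=
  (p.edges.map (fun e => ENNReal.ofReal (w e))).sum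

/-- Shortest-path distance in a weighted graph (`⊤` if no walk exists). -/
noncomputable def wdist {V : Type*} (G : SimpleGraph V) (w : Sym2 V → ℝ) (u v : V) : ℝ≥0∞ :=
  ⨅ p : G.Walk u v, walkCost w p

/-- Total weight of (the edges of) a graph. -/
noncomputable def gweight {V : Type*} (w : Sym2 V → ℝ) (H : SimpleGraph V) : ℝ :=
  ∑ᶠ e ∈ H.edgeSet, w e

/-- `T` is a spanning tree of `G`. -/
def IsSpanningTree {V : Type*} (G T : SimpleGraph V) : Prop :=
  T ≤ G ∧ T.IsTree

/-- Weight of a minimum spanning tree of `G`. -/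
noncomputable def mstWeight {V : Type*} (w : Sym2 V → ℝ) (G : SimpleGraph V) : ℝ :=
  sInf {x : ℝ | ∃ T : SimpleGraph V, IsSpanningTree G T ∧ x = gweight w T}

/-- Maximum edge weight on a walk. -/
noncomputable def maxEdgeCost {V : Type*} {G : SimpleGraph V} (w : Sym2 V → ℝ) {u v : V}
    (p : G.Walk u v) : ℝ≥0∞ :=
  (p.edges.map (fun e => ENNReal.ofReal (w e))).foldr max 0

/-- `W(x,y)`: the minimum over all shortest `x`–`y` walks of the maximum edge weight on it. -/
noncomputable def Wlocal {V : Type*} (G : SimpleGraph V) (w : Sym2 V → ℝ) (x y : V) : ℝ≥0∞ :=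
  ⨅ p : {p : G.Walk x y // walkCost w p = wdist G w x y}, maxEdgeCost w p.1

/-!
Put `δ = Δ/2`, fix a spanning tree `T` of `G` and view each edge `e` of `T` as a segment of
length `w e`. The `δ`-balls around the points of `N` are pairwise disjoint, so together they cover
at most `w e` of every edge. On the other hand each of these balls covers a total length at least
`δ`, namely along the path from its centre to another point of `N`. Summing, `|N| δ ≤ w(T)`.
-/

open Finset

theorem Finset.sum_le_of_card_filter_ne_zero_le_two {ι M : Type*} [AddCommMonoid M]
    [PartialOrder M] [CanonicallyOrderedAdd M] [DecidableEq M]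
    {s : Finset ι} {f : ι → M} {c : M}
    (hs : #{i ∈ s | f i ≠ 0} ≤ 2) (hf : ∀ i ∈ s, f i ≤ c)
    (hpair : ∀ i ∈ s, ∀ j ∈ s, i ≠ j → f i + f j ≤ c) :
    ∑ i ∈ s, f i ≤ c := by
  classical
  rw [← sum_filter_ne_zero]
  have hmem : ∀ i ∈ {i ∈ s | f i ≠ 0}, i ∈ s := fun i hi => (mem_filter.1 hi).1
  obtain h | h | h : #{i ∈ s | f i ≠ 0} = 0 ∨ #{i ∈ s | f i ≠ 0} = 1 ∨
      #{i ∈ s | f i ≠ 0} = 2 := by omega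
  · simp [card_eq_zero.1 h]
  · obtain ⟨i, hi⟩ := card_eq_one.1 h
    rw [hi, sum_singleton]
    exact hf i (hmem i (by simp [hi]))
  · obtain ⟨i, j, hij, hs⟩ := card_eq_two.1 h
    rw [hs, sum_pair hij]
    exact hpair i (hmem i (by simp [hs])) j (hmem j (by simp [hs])) hij

section WeightedDistance

variable {V : Type*} {G H : SimpleGraph V} (w : Sym2 V → ℝ)

@[simp]
theorem walkCost_nil {u : V} : walkCost w (SimpleGraph.Walk.nil : G.Walk u u) = 0 := by
  simp [walkCost]

@[simp]
theorem walkCost_cons {u x v : V} (h : G.Adj u x) (p : G.Walk x v) :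
    walkCost w (.cons h p) = ENNReal.ofReal (w s(u, x)) + walkCost w p := by
  simp [walkCost]

theorem walkCost_append {u x v : V} (p : G.Walk u x) (q : G.Walk x v) :
    walkCost w (p.append q) = walkCost w p + walkCost w q := by
  simp [walkCost]

theorem walkCost_reverse {u v : V} (p : G.Walk u v) : walkCost w p.reverse = walkCost w p := by
  simp [walkCost, List.sum_reverse]

theorem walkCost_mapLe (hle : H ≤ G) {u v : V} (p : H.Walk u v) :
    walkCost w (p.mapLe hle) = walkCost w p := by
  simp [walkCost]

theorem wdist_le_walkCost {u v : V} (p : G.Walk u v) : wdist G w u v ≤ walkCost w p :=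
  iInf_le _ p

@[simp]
theorem wdist_self (u : V) : wdist G w u u = 0 :=
  nonpos_iff_eq_zero.1 <| by simpa using wdist_le_walkCost w (.nil : G.Walk u u)

theorem wdist_comm (u v : V) : wdist G w u v = wdist G w v u := by
  have key (a b : V) : wdist G w a b ≤ wdist G w b a :=
    le_iInf fun p => (wdist_le_walkCost w p.reverse).trans_eq (walkCost_reverse w p)
  exact le_antisymm (key u v) (key v u)

theorem wdist_triangle (u x v : V) : wdist G w u v ≤ wdist G w u x + wdist G w x v :=
  ENNReal.le_iInf_add_iInf fun p q =>
    (wdist_le_walkCost w (p.append q)).trans_eq (walkCost_append w p q)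

theorem wdist_le_of_le (hle : H ≤ G) (u v : V) : wdist G w u v ≤ wdist H w u v :=
  le_iInf fun p => (wdist_le_walkCost w (p.mapLe hle)).trans_eq (walkCost_mapLe w hle p)

theorem wdist_le_add_of_adj (u : V) {a b : V} (hab : G.Adj a b) :
    wdist G w u b ≤ wdist G w u a + ENNReal.ofReal (w s(a, b)) :=
  (wdist_triangle w u a b).trans <| add_le_add_right
    (by simpa using wdist_le_walkCost w (.cons hab .nil : G.Walk a b)) _

theorem eq_of_wdist_lt_of_wdist_lt {N : Set V} {δ : ℝ≥0∞}
    (hN : N.Pairwise fun u v => δ + δ ≤ wdist G w u v) {u v x : V} (hu : u ∈ N) (hv : v ∈ N)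
    (hux : wdist G w u x < δ) (hvx : wdist G w v x < δ) : u = v := by
  by_contra huv
  have := (hN hu hv huv).trans (wdist_triangle w u x v)
  rw [wdist_comm w x v] at this
  exact this.not_gt (ENNReal.add_lt_add hux hvx)

end WeightedDistance

section BallCover

variable {V : Type*} {H : SimpleGraph V} (w : Sym2 V → ℝ) (δ : ℝ≥0∞)

/-- Seen as a segment of length `w e`, the edge `e` meets the `δ`-ball around `u` in at least
this length: the longer of the two pieces reaching into `e` from its endpoints. -/
noncomputable def ballCover (H : SimpleGraph V) (u : V) (e : Sym2 V) : ℝ≥0∞ :=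
  min (ENNReal.ofReal (w e))
    (δ - Sym2.lift ⟨fun a b => min (wdist H w u a) (wdist H w u b), fun _ _ => min_comm _ _⟩ e)

@[simp]
theorem ballCover_mk (u a b : V) : ballCover w δ H u s(a, b) =
    min (ENNReal.ofReal (w s(a, b))) (δ - min (wdist H w u a) (wdist H w u b)) :=
  rfl

theorem ballCover_le (u : V) (e : Sym2 V) : ballCover w δ H u e ≤ ENNReal.ofReal (w e) :=
  min_le_left _ _

theorem ballCover_le_tsub_left {u a b : V} (h : wdist H w u a ≤ wdist H w u b) :
    ballCover w δ H u s(a, b) ≤ δ - wdist H w u a := by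
  rw [ballCover_mk, min_eq_left h]
  exact min_le_right _ _

theorem wdist_lt_or_wdist_lt_of_ballCover_ne_zero {u a b : V}
    (h : ballCover w δ H u s(a, b) ≠ 0) : wdist H w u a < δ ∨ wdist H w u b < δ := by
  contrapose! h
  simp [tsub_eq_zero_of_le (le_min h.1 h.2)]

theorem min_wdist_le_min_wdist_add_ballCover (u : V) {a b : V} (hab : H.Adj a b) :
    min δ (wdist H w u b) ≤ min δ (wdist H w u a) + ballCover w δ H u s(a, b) := by
  have hcover :
      min (ENNReal.ofReal (w s(a, b))) (δ - wdist H w u a) ≤ ballCover w δ H u s(a, b) :=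
    min_le_min le_rfl (tsub_le_tsub_left (min_le_left _ _) δ)
  rcases le_total δ (wdist H w u a) with h | h
  · rw [min_eq_left h]
    exact (min_le_left _ _).trans le_self_add
  · calc min δ (wdist H w u b)
        ≤ min (wdist H w u a + ENNReal.ofReal (w s(a, b))) δ := by
          rw [min_comm]; exact min_le_min_right _ (wdist_le_add_of_adj w u hab)
      _ = min (wdist H w u a + ENNReal.ofReal (w s(a, b)))
            (wdist H w u a + (δ - wdist H w u a)) := by
          rw [add_tsub_cancel_of_le h]
      _ = wdist H w u a + min (ENNReal.ofReal (w s(a, b))) (δ - wdist H w u a) :=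
          min_add_add_left _ _ _
      _ ≤ min δ (wdist H w u a) + ballCover w δ H u s(a, b) := by
          rw [min_eq_right h]; gcongr

theorem min_wdist_le_min_wdist_add_sum_ballCover (u : V) {a b : V} (p : H.Walk a b) :
    min δ (wdist H w u b) ≤ min δ (wdist H w u a) + (p.edges.map (ballCover w δ H u)).sum := by
  induction p with
  | nil => simp
  | cons hab p ih =>
    rw [SimpleGraph.Walk.edges_cons, List.map_cons, List.sum_cons, ← add_assoc]
    exact ih.trans (by gcongr; exact min_wdist_le_min_wdist_add_ballCover w δ u hab)

theorem le_sum_ballCover [Fintype H.edgeSet] (hH : H.Connected) {u v : V}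
    (huv : δ ≤ wdist H w u v) : δ ≤ ∑ e ∈ H.edgeFinset, ballCover w δ H u e := by
  classical
  obtain ⟨p⟩ := hH.preconnected u v
  calc δ = min δ (wdist H w u v) := (min_eq_left huv).symm
    _ ≤ (p.bypass.edges.map (ballCover w δ H u)).sum := by
      simpa using min_wdist_le_min_wdist_add_sum_ballCover w δ u p.bypass
    _ = ∑ e ∈ p.bypass.edges.toFinset, ballCover w δ H u e :=
      (List.sum_toFinset _ p.bypass_isPath.isTrail.edges_nodup).symm
    _ ≤ ∑ e ∈ H.edgeFinset, ballCover w δ H u e :=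
      sum_le_sum_of_subset fun e he => SimpleGraph.mem_edgeFinset.2
        (p.bypass.edges_subset_edgeSet (List.mem_toFinset.1 he))

theorem ballCover_add_ballCover_le {u v a b : V} (hab : H.Adj a b)
    (huv : δ + δ ≤ wdist H w u v) (hua : wdist H w u a < δ) (hvb : wdist H w v b < δ)
    (hub : δ ≤ wdist H w u b) (hva : δ ≤ wdist H w v a) :
    ballCover w δ H u s(a, b) + ballCover w δ H v s(a, b) ≤ ENNReal.ofReal (w s(a, b)) := by
  have hu := ballCover_le_tsub_left w δ (hua.le.trans hub)
  have hv : ballCover w δ H v s(a, b) ≤ δ - wdist H w v b := by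
    rw [Sym2.eq_swap]; exact ballCover_le_tsub_left w δ (hvb.le.trans hva)
  have hpath : δ + δ ≤ ENNReal.ofReal (w s(a, b)) + (wdist H w u a + wdist H w v b) := by
    calc δ + δ ≤ wdist H w u b + wdist H w b v := huv.trans (wdist_triangle w u b v)
      _ ≤ wdist H w u a + ENNReal.ofReal (w s(a, b)) + wdist H w v b := by
        rw [wdist_comm w b v]; gcongr; exact wdist_le_add_of_adj w u hab
      _ = _ := by ring
  calc _ ≤ (δ - wdist H w u a) + (δ - wdist H w v b) := add_le_add hu hv
    _ = δ + δ - (wdist H w u a + wdist H w v b) :=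
      AddLECancellable.tsub_add_tsub_comm (ENNReal.cancel_of_lt' hua) (ENNReal.cancel_of_lt' hvb)
        hua.le hvb.le
    _ ≤ ENNReal.ofReal (w s(a, b)) := tsub_le_iff_right.2 hpath

variable {N : Finset V} (hN : (N : Set V).Pairwise fun u v => δ + δ ≤ wdist H w u v)
include hN

theorem ballCover_add_ballCover_le_of_ne {u v a b : V} (hu : u ∈ N) (hv : v ∈ N) (huv : u ≠ v)
    (hab : H.Adj a b) :
    ballCover w δ H u s(a, b) + ballCover w δ H v s(a, b) ≤ ENNReal.ofReal (w s(a, b)) := by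
  by_cases hu0 : ballCover w δ H u s(a, b) = 0
  · simp [hu0]
  by_cases hv0 : ballCover w δ H v s(a, b) = 0
  · simp [hv0]
  have hunique {x : V} (hux : wdist H w u x < δ) (hvx : wdist H w v x < δ) : False :=
    huv (eq_of_wdist_lt_of_wdist_lt w hN hu hv hux hvx)
  rcases wdist_lt_or_wdist_lt_of_ballCover_ne_zero w δ hu0 with hua | hub <;>
    rcases wdist_lt_or_wdist_lt_of_ballCover_ne_zero w δ hv0 with hva | hvb
  · exact (hunique hua hva).elim
  · exact ballCover_add_ballCover_le w δ hab (hN hu hv huv) hua hvb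
      (not_lt.1 fun hub => hunique hub hvb) (not_lt.1 fun hva => hunique hua hva)
  · rw [Sym2.eq_swap]
    exact ballCover_add_ballCover_le w δ hab.symm (hN hu hv huv) hub hva
      (not_lt.1 fun hua => hunique hua hva) (not_lt.1 fun hvb => hunique hub hvb)
  · exact (hunique hub hvb).elim

theorem sum_ballCover_le {e : Sym2 V} (he : e ∈ H.edgeSet) :
    ∑ u ∈ N, ballCover w δ H u e ≤ ENNReal.ofReal (w e) := by
  classical
  induction e using Sym2.ind with
  | _ a b =>
    have hcard_near (x : V) : #{u ∈ N | wdist H w u x < δ} ≤ 1 :=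
      card_le_one.2 fun u hu v hv => eq_of_wdist_lt_of_wdist_lt w hN (mem_filter.1 hu).1
        (mem_filter.1 hv).1 (mem_filter.1 hu).2 (mem_filter.1 hv).2
    have hsupport : {u ∈ N | ballCover w δ H u s(a, b) ≠ 0} ⊆
        {u ∈ N | wdist H w u a < δ} ∪ {u ∈ N | wdist H w u b < δ} := fun u hu => by
      simp only [mem_filter, mem_union] at hu ⊢
      rcases wdist_lt_or_wdist_lt_of_ballCover_ne_zero w δ hu.2 with h | h
      exacts [.inl ⟨hu.1, h⟩, .inr ⟨hu.1, h⟩]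
    refine Finset.sum_le_of_card_filter_ne_zero_le_two ?_ (fun u _ => ballCover_le w δ u _)
      fun u hu v hv huv => ballCover_add_ballCover_le_of_ne w δ hN hu hv huv he
    calc _ ≤ _ := card_le_card hsupport
      _ ≤ _ := card_union_le _ _
      _ ≤ 2 := by linarith [hcard_near a, hcard_near b]

theorem card_mul_le_sum_ofReal [Fintype H.edgeSet] (hH : H.Connected) (hN2 : 2 ≤ #N) :
    #N * δ ≤ ∑ e ∈ H.edgeFinset, ENNReal.ofReal (w e) := by
  have hcover (u : V) (hu : u ∈ N) : δ ≤ ∑ e ∈ H.edgeFinset, ballCover w δ H u e := by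
    obtain ⟨v, hv, hvu⟩ := exists_mem_ne (by omega : 1 < #N) u
    exact le_sum_ballCover w δ hH (le_self_add.trans (hN hu hv hvu.symm))
  calc (#N : ℝ≥0∞) * δ = ∑ _u ∈ N, δ := by rw [sum_const, nsmul_eq_mul]
    _ ≤ ∑ u ∈ N, ∑ e ∈ H.edgeFinset, ballCover w δ H u e := sum_le_sum hcover
    _ = ∑ e ∈ H.edgeFinset, ∑ u ∈ N, ballCover w δ H u e := sum_comm
    _ ≤ ∑ e ∈ H.edgeFinset, ENNReal.ofReal (w e) :=
      sum_le_sum fun e he => sum_ballCover_le w δ hN (SimpleGraph.mem_edgeFinset.1 he)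

end BallCover

theorem card_mul_le_two_mul_gweight {V : Type*} [Fintype V] {H : SimpleGraph V}
    (w : Sym2 V → ℝ) (hH : H.Connected) (hw : ∀ e ∈ H.edgeSet, 0 ≤ w e)
    {Δ : ℝ} (hΔ : 0 ≤ Δ) {N : Finset V} (hN2 : 2 ≤ #N)
    (hN : (N : Set V).Pairwise fun u v => ENNReal.ofReal Δ ≤ wdist H w u v) :
    (#N : ℝ) * Δ ≤ 2 * gweight w H := by
  classical
  have hδ : ENNReal.ofReal (Δ / 2) + ENNReal.ofReal (Δ / 2) = ENNReal.ofReal Δ := by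
    rw [← ENNReal.ofReal_add (by linarith) (by linarith), add_halves]
  have hw' (e) (he : e ∈ H.edgeFinset) : 0 ≤ w e := hw e (SimpleGraph.mem_edgeFinset.1 he)
  have hgweight : gweight w H = ∑ e ∈ H.edgeFinset, w e := by
    rw [gweight, ← SimpleGraph.coe_edgeFinset, finsum_mem_coe_finset]
  have key := card_mul_le_sum_ofReal w (ENNReal.ofReal (Δ / 2))
    (hN.mono' fun u v h => hδ ▸ h) hH hN2
  rw [← ENNReal.ofReal_sum_of_nonneg hw', ← ENNReal.ofReal_natCast,
    ← ENNReal.ofReal_mul (Nat.cast_nonneg _), ENNReal.ofReal_le_ofReal_iff (sum_nonneg hw')]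
    at key
  linarith

/-- If `N` is a `Δ`-separated set of at least two vertices in a connected weighted graph `G`,
then `|N|·Δ ≤ 2·w(MST(G))`. -/
theorem separated_set_vs_mst {V : Type} [Fintype V] (G : SimpleGraph V) (w : Sym2 V → ℝ)
    (hG : G.Connected) (hw : ∀ e ∈ G.edgeSet, 0 < w e)
    (Δ : ℝ) (hΔ : 0 < Δ) (N : Set V) (hN2 : 2 ≤ N.ncard)
    (hsep : ∀ u ∈ N, ∀ v ∈ N, u ≠ v → ENNReal.ofReal Δ < wdist G w u v) :
    (N.ncard : ℝ) * Δ ≤ 2 * mstWeight w G := by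
  classical
  have hbound (T : SimpleGraph V) (hT : IsSpanningTree G T) :
      (N.ncard : ℝ) * Δ / 2 ≤ gweight w T := by
    have hsepT : (N.toFinset : Set V).Pairwise fun u v => ENNReal.ofReal Δ ≤ wdist T w u v :=
      fun u hu v hv huv => (hsep u (by simpa using hu) v (by simpa using hv) huv).le.trans
        (wdist_le_of_le w hT.1 u v)
    have := card_mul_le_two_mul_gweight w hT.2.connected
      (fun e he => (hw e (SimpleGraph.edgeSet_mono hT.1 he)).le) hΔ.le
      (by rwa [← Set.ncard_eq_toFinset_card']) hsepT
    rw [Set.ncard_eq_toFinset_card']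
    linarith
  obtain ⟨T, hTG, hT⟩ := hG.exists_isTree_le
  suffices (N.ncard : ℝ) * Δ / 2 ≤ mstWeight w G by linarith
  exact le_csInf ⟨_, T, ⟨hTG, hT⟩, rfl⟩ fun _ ⟨T, hT, hx⟩ => hx ▸ hbound T hT
end

section
/- Let (X,d) be a metric space, let Δ > 0 be a real number, and let N ⊆ X be a finite set with |N| = m ≥ 2 such that d(u,v) > Δ for all distinct u, v ∈ N. Then for every finite sequence x_0, x_1, …, x_ℓ of points of X such that every point of N occurs among the x_i, one has ∑_{i=0}^{ℓ−1} d(x_i, x_{i+1}) ≥ (m−1)·Δ. -/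
/-!
Choose one visiting time for each point of `N`. Between two consecutive chosen times the tour
travels from one point of `N` to another, which by the triangle inequality costs more than `Δ`,
and the `m` chosen times leave `m - 1` such gaps.
-/

open Finset

theorem sub_one_mul_le_sum_dist_of_pairwise_le_dist {X : Type*} [PseudoMetricSpace X]
    (x : ℕ → X) (Δ : ℝ) (s : Finset ℕ) (hs : s.Nonempty)
    (hsep : (s : Set ℕ).Pairwise fun i j => Δ ≤ dist (x i) (x j)) :
    ((#s : ℝ) - 1) * Δ ≤ ∑ i ∈ range (s.max' hs), dist (x i) (x (i + 1)) := by
  induction s using Finset.induction_on_max with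
  | empty => exact absurd hs Finset.not_nonempty_empty
  | insert a t hlt ih =>
    have hmax : (insert a t).max' hs = a :=
      le_antisymm (max'_le _ _ _ fun i hi => by grind) (le_max' _ _ (mem_insert_self a t))
    rw [hmax]
    rcases t.eq_empty_or_nonempty with rfl | ht
    · simpa using sum_nonneg fun i _ => dist_nonneg
    set b := t.max' ht
    have hba : b < a := hlt b (max'_mem t ht)
    have hcard : (#(insert a t) : ℝ) = #t + 1 := by
      rw [card_insert_of_notMem fun ha => (hlt a ha).false, Nat.cast_succ]
    have hprev := ih ht (hsep.mono (by simp))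
    have hstep : Δ ≤ ∑ i ∈ Ico b a, dist (x i) (x (i + 1)) :=
      (hsep (by simp [b, max'_mem]) (by simp) hba.ne).trans (dist_le_Ico_sum_dist x hba.le)
    rw [← sum_range_add_sum_Ico _ hba.le, hcard]
    linarith

theorem separated_tour_length_general {X : Type*} [MetricSpace X]
    (Δ : ℝ) (N : Set X) (hNfin : N.Finite)
    (m : ℕ) (hm : N.ncard = m) (hm2 : 2 ≤ m)
    (hsep : ∀ u ∈ N, ∀ v ∈ N, u ≠ v → Δ < dist u v)
    (ℓ : ℕ) (x : ℕ → X) (hcover : ∀ y ∈ N, ∃ i ≤ ℓ, x i = y) :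
    ((m : ℝ) - 1) * Δ ≤ ∑ i ∈ Finset.range ℓ, dist (x i) (x (i + 1)) := by
  classical
  obtain ⟨s, hsℓ, hinj, himg⟩ := exists_subset_injOn_image_eq_of_surjOn {i | i ≤ ℓ}
    hNfin.toFinset fun y hy => by simpa using hcover y (by simpa using hy)
  have hxN : ∀ i ∈ s, x i ∈ N := fun i hi => by
    rw [← hNfin.mem_toFinset, ← himg]
    exact mem_image_of_mem x hi
  have hcard : #s = m := by
    rw [← hm, Set.ncard_eq_toFinset_card N hNfin, ← himg, card_image_of_injOn hinj]
  have hs : s.Nonempty := card_pos.mp (by omega)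
  calc ((m : ℝ) - 1) * Δ = ((#s : ℝ) - 1) * Δ := by rw [hcard]
    _ ≤ ∑ i ∈ range (s.max' hs), dist (x i) (x (i + 1)) :=
      sub_one_mul_le_sum_dist_of_pairwise_le_dist x Δ s hs fun i hi j hj hij =>
        (hsep _ (hxN i hi) _ (hxN j hj) (hinj.ne hi hj hij)).le
    _ ≤ ∑ i ∈ range ℓ, dist (x i) (x (i + 1)) :=
      sum_le_sum_of_subset_of_nonneg (range_subset_range.mpr (hsℓ (max'_mem s hs)))
        fun _ _ _ => dist_nonneg

/-- Packing lemma: any tour `x_0, x_1, …, x_ℓ` visiting all points of a `Δ`-separated set of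
`m ≥ 2` points in a metric space has total length at least `(m-1)·Δ`. -/
theorem separated_tour_length {X : Type*} [MetricSpace X]
    (Δ : ℝ) (hΔ : 0 < Δ) (N : Set X) (hNfin : N.Finite)
    (m : ℕ) (hm : N.ncard = m) (hm2 : 2 ≤ m)
    (hsep : ∀ u ∈ N, ∀ v ∈ N, u ≠ v → Δ < dist u v)
    (ℓ : ℕ) (x : ℕ → X) (hcover : ∀ y ∈ N, ∃ i ≤ ℓ, x i = y) :
    ((m : ℝ) - 1) * Δ ≤ ∑ i ∈ Finset.range ℓ, dist (x i) (x (i + 1)) :=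
  separated_tour_length_general Δ N hNfin m hm hm2 hsep ℓ x hcover
end
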